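/- Fix α > 0, ε > 0, and 0 < δ₁ < 1/(2 + 1/(α+ε)); set s = (α+ε)/(2(α+ε)+1) + δ₁. For a Lüroth word b = (b_1,…,b_n) let R_n(b) = Q_n(b)^{1/(α+ε)} and let K_n(b) be the closure of the union of the cylinders C_{n+1}(b, c) over integers c ≥ R_n(b). Then there exists N such that for all n ≥ N and all words b of length n with digits ≥ 2: Σ_{c ≥ R_n(b), c ∈ ℕ} |K_{n+1}(b c)|^s ≤ |K_n(b)|^s. -/

import Mathlib

/-- The Lüroth map L(x) = ⌊1/x⌋(⌊1/x⌋+1)x − ⌊1/x⌋, with L(0) = 0. -/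
noncomputable def lurothL (x : ℝ) : ℝ :=
  if x = 0 then 0 else (⌊1 / x⌋ : ℝ) * ((⌊1 / x⌋ : ℝ) + 1) * x - (⌊1 / x⌋ : ℝ)

/-- The n-th Lüroth digit (1-indexed): a_n(x) = ⌊1/L^{n−1}(x)⌋ + 1. -/
noncomputable def lurothDigit (n : ℕ) (x : ℝ) : ℕ :=
  (⌊1 / lurothL^[n - 1] x⌋).toNat + 1

/-- The cylinder of a word (b_1, …, b_n). -/
noncomputable def lurothCyl (b : ℕ → ℕ) (n : ℕ) : Set ℝ :=
  {x ∈ Set.Ioc (0 : ℝ) 1 | ∀ j ∈ Finset.Icc 1 n, lurothDigit j x = b j}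

/-- The continuant of a word: Q_n(b) = b_1(b_1−1)⋯b_{n−1}(b_{n−1}−1)b_n. -/
def lurothQ (b : ℕ → ℕ) (n : ℕ) : ℕ :=
  (∏ j ∈ Finset.Ico 1 n, b j * (b j - 1)) * b n

/-- R_n(b) = Q_n(b)^{1/(α+ε)}. -/
noncomputable def lurothR (αε : ℝ) (b : ℕ → ℕ) (n : ℕ) : ℝ :=
  (lurothQ b n : ℝ) ^ (1 / αε)

/-- K_n(b): the closure of the union of the cylinders C_{n+1}(b, c) over
integers c ≥ R_n(b). -/
noncomputable def lurothK (αε : ℝ) (b : ℕ → ℕ) (n : ℕ) : Set ℝ :=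
  closure (⋃ c : ℕ, ⋃ (_ : lurothR αε b n ≤ (c : ℝ)),
    lurothCyl (Function.update b (n + 1) c) (n + 1))

/-!
A Lüroth cylinder `C_n(b)` of a word with digits `≥ 2` is an interval `(u, u + P]` of length
`P = ∏ 1/(b_j(b_j-1))` which `L^n` maps affinely onto `(0, 1]`; so `C_{n+1}(b c)` is the piece
`(u + P/c, u + P/(c-1)]`, and `K_n(b) = [u, u + P/(⌈R⌉ - 1)]` with `R = R_n(b)`, whose diameter
lies between `P/R` and `2P/R` once `R ≥ 2`. As `Q_{n+1}(b c) ≥ Q_n(b) c`, the child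
`K_{n+1}(b c)` has diameter at most `4 (P/R) c^{-(2 + 1/(α+ε))}`, so the sum is at most
`(4P/R)^s ∑_{c ≥ R} c^{-t}` with `t = s (2 + 1/(α+ε)) > 1`. The factor `R^{-(t-1)/2}` split off
from `c^{-t}` beats the constant `4^s ∑ c^{-(t+1)/2}` as soon as `R ≥ 2^{n/(α+ε)}` is large,
leaving `(P/R)^s ≤ |K_n(b)|^s`.
-/

open Set Filter

lemma one_le_natCast_sub_one {c : ℕ} (hc : 2 ≤ c) : (1 : ℝ) ≤ c - 1 := by
  have : (2 : ℝ) ≤ c := by exact_mod_cast hc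
  linarith

lemma Int.floor_one_div_eq_iff {x : ℝ} (hx : 0 < x) {m : ℤ} (hm : 0 < m) :
    ⌊1 / x⌋ = m ↔ x ∈ Ioc (1 / ((m : ℝ) + 1)) (1 / m) := by
  have hm' : (0 : ℝ) < m := by exact_mod_cast hm
  rw [Int.floor_eq_iff, mem_Ioc, one_div_lt (by positivity) hx, le_one_div hm' hx, and_comm]

lemma lurothDigit_one_eq_iff {x : ℝ} (hx : 0 < x) {c : ℕ} (hc : 2 ≤ c) :
    lurothDigit 1 x = c ↔ x ∈ Ioc (1 / (c : ℝ)) (1 / ((c : ℝ) - 1)) := by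
  have key := Int.floor_one_div_eq_iff hx (m := (c : ℤ) - 1) (by omega)
  push_cast at key
  rw [sub_add_cancel] at key
  rw [← key, lurothDigit, Nat.sub_self, Function.iterate_zero, id]
  omega

lemma lurothL_of_mem_Ioc {x : ℝ} {c : ℕ} (hc : 2 ≤ c)
    (hx : x ∈ Ioc (1 / (c : ℝ)) (1 / ((c : ℝ) - 1))) :
    lurothL x = c * (c - 1) * x - (c - 1) := by
  have hx0 : 0 < x := lt_trans (by positivity) hx.1
  have hfloor : ⌊1 / x⌋ = (c : ℤ) - 1 := by
    rw [Int.floor_one_div_eq_iff hx0 (by omega)]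
    push_cast
    rwa [sub_add_cancel]
  rw [lurothL, if_neg hx0.ne', hfloor]
  push_cast
  ring

noncomputable def lurothCylLength (b : ℕ → ℕ) (n : ℕ) : ℝ :=
  ∏ j ∈ Finset.Icc 1 n, 1 / ((b j : ℝ) * (b j - 1))

lemma lurothCylLength_succ (b : ℕ → ℕ) (n : ℕ) :
    lurothCylLength b (n + 1) = lurothCylLength b n / (b (n + 1) * (b (n + 1) - 1)) := by
  rw [lurothCylLength, Finset.prod_Icc_succ_top (by omega), ← lurothCylLength, mul_one_div]

lemma lurothCylLength_pos {b : ℕ → ℕ} {n : ℕ} (hb : ∀ j ∈ Finset.Icc 1 n, 2 ≤ b j) :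
    0 < lurothCylLength b n := by
  refine Finset.prod_pos fun j hj => ?_
  have h2 : (2 : ℝ) ≤ b j := by exact_mod_cast hb j hj
  have : (0 : ℝ) < b j * (b j - 1) := by nlinarith
  positivity

lemma lurothCylLength_update_of_lt (b : ℕ → ℕ) {n m : ℕ} (h : n < m) (c : ℕ) :
    lurothCylLength (Function.update b m c) n = lurothCylLength b n :=
  Finset.prod_congr rfl fun j hj => by
    rw [Function.update_of_ne (by simp at hj; omega)]

lemma lurothCyl_zero (b : ℕ → ℕ) : lurothCyl b 0 = Ioc 0 1 := by
  ext x
  simp [lurothCyl]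

lemma lurothCyl_succ (b : ℕ → ℕ) (n : ℕ) :
    lurothCyl b (n + 1) = {x ∈ lurothCyl b n | lurothDigit 1 (lurothL^[n] x) = b (n + 1)} := by
  ext x
  simp only [lurothCyl, mem_ofPred_eq,
    ← Finset.insert_Icc_right_eq_Icc_add_one (by omega : 1 ≤ n + 1), Finset.forall_mem_insert,
    and_assoc, and_comm (a := lurothDigit (n + 1) x = _)]
  rfl

lemma lurothCyl_update_of_lt (b : ℕ → ℕ) {n m : ℕ} (h : n < m) (c : ℕ) :
    lurothCyl (Function.update b m c) n = lurothCyl b n := by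
  ext x
  refine and_congr_right fun _ => forall₂_congr fun j hj => ?_
  rw [Function.update_of_ne (by simp at hj; omega)]

lemma setOf_lurothDigit_one_div_eq_Ioc {u P : ℝ} (hP : 0 < P) {c : ℕ} (hc : 2 ≤ c) :
    {x ∈ Ioc u (u + P) | lurothDigit 1 ((x - u) / P) = c} =
      Ioc (u + P / c) (u + P / (c - 1)) := by
  have hc1 := one_le_natCast_sub_one hc
  have hleft (x : ℝ) : u + P / c < x ↔ 1 * P < (x - u) * c := by
    rw [← lt_sub_iff_add_lt', div_lt_iff₀ (by positivity), one_mul]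
  have hright (x : ℝ) : x ≤ u + P / (c - 1) ↔ (x - u) * (c - 1) ≤ 1 * P := by
    rw [← sub_le_iff_le_add', le_div_iff₀ (by positivity), one_mul]
  ext x
  simp only [mem_ofPred_eq, mem_Ioc, hleft, hright]
  constructor
  · rintro ⟨⟨hux, -⟩, hd⟩
    rwa [lurothDigit_one_eq_iff (div_pos (by linarith) hP) hc, mem_Ioc,
      div_lt_div_iff₀ (by positivity) hP, div_le_div_iff₀ hP (by positivity)] at hd
  · rintro ⟨h₁, h₂⟩
    have hux : u < x := by nlinarith
    refine ⟨⟨hux, by nlinarith⟩, ?_⟩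
    rw [lurothDigit_one_eq_iff (div_pos (by linarith) hP) hc, mem_Ioc,
      div_lt_div_iff₀ (by positivity) hP, div_le_div_iff₀ hP (by positivity)]
    exact ⟨h₁, h₂⟩

lemma lurothCyl_succ_eq_Ioc {b : ℕ → ℕ} {n : ℕ} {u P : ℝ} (hP : 0 < P)
    (hcyl : lurothCyl b n = Ioc u (u + P))
    (hL : ∀ x ∈ lurothCyl b n, lurothL^[n] x = (x - u) / P) (hc : 2 ≤ b (n + 1)) :
    lurothCyl b (n + 1) = Ioc (u + P / b (n + 1)) (u + P / (b (n + 1) - 1)) ∧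
      ∀ x ∈ lurothCyl b (n + 1), lurothL^[n + 1] x =
        (x - (u + P / b (n + 1))) / (P / (b (n + 1) * (b (n + 1) - 1))) := by
  set c := b (n + 1)
  have hcyl_succ : lurothCyl b (n + 1) = Ioc (u + P / c) (u + P / (c - 1)) := by
    rw [← setOf_lurothDigit_one_div_eq_Ioc hP hc, lurothCyl_succ, ← hcyl]
    ext x
    exact and_congr_right fun hx => by rw [hL x hx]
  refine ⟨hcyl_succ, fun x hx => ?_⟩
  obtain ⟨hxn, hd⟩ : x ∈ lurothCyl b n ∧ lurothDigit 1 (lurothL^[n] x) = c := by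
    rwa [lurothCyl_succ] at hx
  have hux : u < x := (hcyl ▸ hxn).1
  rw [hL x hxn, lurothDigit_one_eq_iff (div_pos (by linarith) hP) hc] at hd
  rw [Function.iterate_succ_apply', hL x hxn, lurothL_of_mem_Ioc hc hd]
  field_simp
  ring

lemma exists_lurothCyl_eq_Ioc (n : ℕ) {b : ℕ → ℕ}
    (hb : ∀ j ∈ Finset.Icc 1 n, 2 ≤ b j) :
    ∃ u, lurothCyl b n = Ioc u (u + lurothCylLength b n) ∧
      ∀ x ∈ lurothCyl b n, lurothL^[n] x = (x - u) / lurothCylLength b n := by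
  induction n with
  | zero => exact ⟨0, by simp [lurothCyl_zero, lurothCylLength], by simp [lurothCylLength]⟩
  | succ n ih =>
    have hb' : ∀ j ∈ Finset.Icc 1 n, 2 ≤ b j := fun j hj => hb j (by simp at hj ⊢; omega)
    obtain ⟨u, hcyl, hL⟩ := ih hb'
    have hc : 2 ≤ b (n + 1) := hb (n + 1) (by simp)
    obtain ⟨hcyl', hL'⟩ := lurothCyl_succ_eq_Ioc (lurothCylLength_pos hb') hcyl hL hc
    have hc1 := one_le_natCast_sub_one hc
    refine ⟨_, ?_, fun x hx => by rw [hL' x hx, lurothCylLength_succ]⟩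
    rw [hcyl', lurothCylLength_succ]
    congr 1
    field_simp
    ring

lemma exists_lurothCyl_update_eq_Ioc (n : ℕ) {b : ℕ → ℕ}
    (hb : ∀ j ∈ Finset.Icc 1 n, 2 ≤ b j) :
    ∃ u, ∀ c : ℕ, 2 ≤ c → lurothCyl (Function.update b (n + 1) c) (n + 1) =
      Ioc (u + lurothCylLength b n / c) (u + lurothCylLength b n / (c - 1)) := by
  obtain ⟨u, hcyl, hL⟩ := exists_lurothCyl_eq_Ioc n hb
  refine ⟨u, fun c hc => ?_⟩
  have hupd := lurothCyl_update_of_lt b (Nat.lt_succ_self n) c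
  have h := lurothCyl_succ_eq_Ioc (b := Function.update b (n + 1) c)
    (lurothCylLength_pos hb) (hupd ▸ hcyl) (hupd ▸ hL) (by simpa using hc)
  simpa using h.1

lemma iUnion_Ioc_add_div_eq_Ioc {u P : ℝ} (hP : 0 < P) {c₀ : ℕ} (hc₀ : 2 ≤ c₀) :
    ⋃ (c : ℕ) (_ : c₀ ≤ c), Ioc (u + P / c) (u + P / (c - 1)) =
      Ioc u (u + P / (c₀ - 1)) := by
  have hc₀1 := one_le_natCast_sub_one hc₀
  ext x
  simp only [mem_iUnion]
  constructor
  · rintro ⟨c, hc, hx⟩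
    have hc' : (c₀ : ℝ) ≤ c := by exact_mod_cast hc
    have : 0 < P / c := div_pos hP (by linarith)
    have : P / (c - 1) ≤ P / (c₀ - 1) := by gcongr
    exact ⟨by linarith [hx.1], by linarith [hx.2]⟩
  · rintro ⟨hux, hx⟩
    have ht : 0 < (x - u) / P := div_pos (by linarith) hP
    set c := lurothDigit 1 ((x - u) / P)
    have hc : c₀ ≤ c := by
      have h : ((c₀ - 1 : ℤ) : ℝ) ≤ 1 / ((x - u) / P) := by
        push_cast
        rw [le_one_div (by linarith) ht, div_le_iff₀ hP, one_div_mul_eq_div]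
        linarith
      have := Int.le_floor.2 h
      simp only [c, lurothDigit, Nat.sub_self, Function.iterate_zero, id]
      omega
    refine ⟨c, hc, ?_⟩
    rw [← setOf_lurothDigit_one_div_eq_Ioc hP (hc₀.trans hc)]
    exact ⟨⟨hux, hx.trans (by gcongr; exact div_le_self hP.le hc₀1)⟩, rfl⟩

lemma diam_lurothK {αε : ℝ} {n : ℕ} {b : ℕ → ℕ}
    (hb : ∀ j ∈ Finset.Icc 1 n, 2 ≤ b j) (hR : 1 < lurothR αε b n) :
    Metric.diam (lurothK αε b n) = lurothCylLength b n / (⌈lurothR αε b n⌉₊ - 1) := by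
  obtain ⟨u, hcyl⟩ := exists_lurothCyl_update_eq_Ioc n hb
  have hP := lurothCylLength_pos hb
  have hc₀ : 2 ≤ ⌈lurothR αε b n⌉₊ := Nat.lt_ceil.2 (by exact_mod_cast hR)
  have hc₀1 := one_le_natCast_sub_one hc₀
  have hunion : lurothK αε b n =
      closure (Ioc u (u + lurothCylLength b n / (⌈lurothR αε b n⌉₊ - 1))) := by
    rw [lurothK, ← iUnion_Ioc_add_div_eq_Ioc hP hc₀]
    exact congrArg closure <| iUnion_congr fun c =>
      iUnion_congr_Prop Nat.ceil_le.symm fun hc => hcyl c (hc₀.trans hc)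
  have hlt : u < u + lurothCylLength b n / (⌈lurothR αε b n⌉₊ - 1) :=
    lt_add_of_pos_right u (div_pos hP (by linarith))
  rw [hunion, closure_Ioc hlt.ne, Real.diam_Icc hlt.le, add_sub_cancel_left]

lemma lurothCylLength_div_lurothR_le_diam {αε : ℝ} {n : ℕ} {b : ℕ → ℕ}
    (hb : ∀ j ∈ Finset.Icc 1 n, 2 ≤ b j) (hR : 1 < lurothR αε b n) :
    lurothCylLength b n / lurothR αε b n ≤ Metric.diam (lurothK αε b n) := by
  rw [diam_lurothK hb hR]
  have hc₀ : (2 : ℝ) ≤ ⌈lurothR αε b n⌉₊ := by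
    exact_mod_cast Nat.lt_ceil.2 (by exact_mod_cast hR)
  have := Nat.ceil_lt_add_one (zero_le_one.trans hR.le)
  exact div_le_div_of_nonneg_left (lurothCylLength_pos hb).le (by linarith) (by linarith)

lemma diam_le_two_mul_lurothCylLength_div {αε : ℝ} {n : ℕ} {b : ℕ → ℕ}
    (hb : ∀ j ∈ Finset.Icc 1 n, 2 ≤ b j) (hR : 2 ≤ lurothR αε b n) :
    Metric.diam (lurothK αε b n) ≤ 2 * lurothCylLength b n / lurothR αε b n := by
  rw [diam_lurothK hb (by linarith), show 2 * lurothCylLength b n / lurothR αε b n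
    = lurothCylLength b n / (lurothR αε b n / 2) by ring]
  have := Nat.le_ceil (lurothR αε b n)
  exact div_le_div_of_nonneg_left (lurothCylLength_pos hb).le (by linarith) (by linarith)

lemma two_pow_le_lurothQ {n : ℕ} (hn : 1 ≤ n) {b : ℕ → ℕ}
    (hb : ∀ j ∈ Finset.Icc 1 n, 2 ≤ b j) :
    2 ^ n ≤ lurothQ b n := by
  have hprod : 2 ^ (n - 1) ≤ ∏ j ∈ Finset.Ico 1 n, b j * (b j - 1) := by
    simpa using Finset.pow_card_le_prod (Finset.Ico 1 n) (fun j => b j * (b j - 1)) 2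
      fun j hj => by
        have := hb j (by simp at hj ⊢; omega)
        nlinarith [Nat.sub_add_cancel (by omega : 1 ≤ b j)]
  calc 2 ^ n = 2 ^ (n - 1) * 2 := by rw [← pow_succ, Nat.sub_add_cancel hn]
    _ ≤ lurothQ b n := Nat.mul_le_mul hprod (hb n (by simp; omega))

lemma two_rpow_le_lurothR {αε : ℝ} (hαε : 0 ≤ αε) {n : ℕ} (hn : 1 ≤ n)
    {b : ℕ → ℕ} (hb : ∀ j ∈ Finset.Icc 1 n, 2 ≤ b j) :
    (2 : ℝ) ^ ((n : ℝ) / αε) ≤ lurothR αε b n := by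
  rw [lurothR, div_eq_mul_one_div, Real.rpow_mul zero_le_two, Real.rpow_natCast]
  gcongr
  exact_mod_cast two_pow_le_lurothQ hn hb

lemma lurothQ_mul_le_lurothQ_update {n : ℕ} (hn : 1 ≤ n) {b : ℕ → ℕ} (hbn : 2 ≤ b n)
    (c : ℕ) :
    lurothQ b n * c ≤ lurothQ (Function.update b (n + 1) c) (n + 1) := by
  have hprod : ∏ j ∈ Finset.Ico 1 n,
        Function.update b (n + 1) c j * (Function.update b (n + 1) c j - 1) =
      ∏ j ∈ Finset.Ico 1 n, b j * (b j - 1) :=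
    Finset.prod_congr rfl fun j hj => by rw [Function.update_of_ne (by simp at hj; omega)]
  rw [lurothQ, lurothQ, Finset.prod_Ico_succ_top hn, Function.update_self, hprod,
    Function.update_of_ne (by omega)]
  gcongr
  exact Nat.le_mul_of_pos_right _ (by omega)

lemma lurothR_mul_le_lurothR_update {αε : ℝ} (hαε : 0 ≤ αε) {n : ℕ} (hn : 1 ≤ n)
    {b : ℕ → ℕ} (hbn : 2 ≤ b n) (c : ℕ) :
    lurothR αε b n * (c : ℝ) ^ (1 / αε) ≤
      lurothR αε (Function.update b (n + 1) c) (n + 1) := by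
  rw [lurothR, lurothR, ← Real.mul_rpow (by positivity) (by positivity)]
  gcongr
  exact_mod_cast lurothQ_mul_le_lurothQ_update hn hbn c

lemma diam_lurothK_update_le {αε : ℝ} (hαε : 0 ≤ αε) {n : ℕ} (hn : 1 ≤ n)
    {b : ℕ → ℕ} (hb : ∀ j ∈ Finset.Icc 1 n, 2 ≤ b j) (hR : 2 ≤ lurothR αε b n)
    {c : ℕ} (hc : lurothR αε b n ≤ c) :
    Metric.diam (lurothK αε (Function.update b (n + 1) c) (n + 1)) ≤
      4 * lurothCylLength b n / lurothR αε b n * (c : ℝ) ^ (-(2 + 1 / αε)) := by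
  set R := lurothR αε b n
  set P := lurothCylLength b n
  have hc2 : (2 : ℝ) ≤ c := hR.trans hc
  have hc2' : 2 ≤ c := by exact_mod_cast hc2
  have hcpow : 1 ≤ (c : ℝ) ^ (1 / αε) := Real.one_le_rpow (by linarith) (by positivity)
  have hR' : R * (c : ℝ) ^ (1 / αε) ≤ lurothR αε (Function.update b (n + 1) c) (n + 1) :=
    lurothR_mul_le_lurothR_update hαε hn (hb n (by simp; omega)) c
  have hb' : ∀ j ∈ Finset.Icc 1 (n + 1), 2 ≤ Function.update b (n + 1) c j := by
    intro j hj
    rcases eq_or_ne j (n + 1) with rfl | hj'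
    · simpa using hc2'
    · rw [Function.update_of_ne hj']
      exact hb j (by simp at hj ⊢; omega)
  have hP' : lurothCylLength (Function.update b (n + 1) c) (n + 1) = P / (c * (c - 1)) := by
    rw [lurothCylLength_succ, lurothCylLength_update_of_lt b (Nat.lt_succ_self n),
      Function.update_self]
  have hP : 0 < P := lurothCylLength_pos hb
  calc Metric.diam (lurothK αε (Function.update b (n + 1) c) (n + 1))
      ≤ 2 * (P / (c * (c - 1))) / lurothR αε (Function.update b (n + 1) c) (n + 1) := by
        rw [← hP']
        exact diam_le_two_mul_lurothCylLength_div hb' (by nlinarith)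
    _ ≤ 2 * (2 * P / c ^ 2) / (R * (c : ℝ) ^ (1 / αε)) := by
        gcongr 2 * ?_ / ?_
        rw [div_le_div_iff₀ (by nlinarith) (by positivity)]
        nlinarith [mul_nonneg (mul_nonneg hP.le (by linarith : (0 : ℝ) ≤ c))
          (by linarith : (0 : ℝ) ≤ c - 2)]
    _ = 4 * P / R * (c : ℝ) ^ (-(2 + 1 / αε)) := by
        rw [Real.rpow_neg (by positivity), Real.rpow_add (by positivity), Real.rpow_two]
        field_simp
        ring

lemma tsum_le_of_le_mul_rpow_neg {R C t : ℝ} (hR : 0 < R) (hC : 0 ≤ C) (ht : 1 < t)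
    {f : {c : ℕ // R ≤ c} → ℝ} (hf : ∀ c, f c ≤ C * (c : ℝ) ^ (-t)) :
    ∑' c, f c ≤ C * R ^ (-((t - 1) / 2)) * ∑' c : ℕ, (c : ℝ) ^ (-((t + 1) / 2)) := by
  have hZ : Summable fun c : ℕ => (c : ℝ) ^ (-((t + 1) / 2)) :=
    Real.summable_nat_rpow.2 (by linarith)
  -- half of the excess `t - 1` is paid by `R ≤ c`, the other half keeps the sum convergent
  have hg : ∀ c : {c : ℕ // R ≤ c},
      f c ≤ C * R ^ (-((t - 1) / 2)) * (c : ℝ) ^ (-((t + 1) / 2)) := by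
    rintro ⟨c, hc⟩
    have hsplit :
        (c : ℝ) ^ (-t) = (c : ℝ) ^ (-((t - 1) / 2)) * (c : ℝ) ^ (-((t + 1) / 2)) := by
      rw [← Real.rpow_add (hR.trans_le hc)]
      ring_nf
    refine (hf ⟨c, hc⟩).trans ?_
    rw [hsplit, ← mul_assoc]
    have hcR : (c : ℝ) ^ (-((t - 1) / 2)) ≤ R ^ (-((t - 1) / 2)) :=
      Real.rpow_le_rpow_of_nonpos hR hc (by linarith)
    gcongr
  by_cases hfs : Summable f
  · calc ∑' c, f c
          ≤ ∑' c : {c : ℕ // R ≤ c},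
              C * R ^ (-((t - 1) / 2)) * (c : ℝ) ^ (-((t + 1) / 2)) :=
          hfs.tsum_le_tsum hg ((hZ.subtype {c : ℕ | R ≤ c}).mul_left _)
      _ = C * R ^ (-((t - 1) / 2)) * ∑' c : {c : ℕ // R ≤ c}, (c : ℝ) ^ (-((t + 1) / 2)) :=
          tsum_mul_left
      _ ≤ C * R ^ (-((t - 1) / 2)) * ∑' c : ℕ, (c : ℝ) ^ (-((t + 1) / 2)) := by
          gcongr
          exact hZ.tsum_subtype_le _ {c : ℕ | R ≤ c} (fun c => by positivity)
  · rw [tsum_eq_zero_of_not_summable hfs]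
    positivity

lemma tsum_diam_lurothK_update_rpow_le {αε s t : ℝ} (hαε : 0 < αε) (hs : 0 < s)
    (ht_def : t = (2 + 1 / αε) * s) (ht : 1 < t) {n : ℕ} (hn : 1 ≤ n) {b : ℕ → ℕ}
    (hb : ∀ j ∈ Finset.Icc 1 n, 2 ≤ b j) (hR : 2 ≤ lurothR αε b n)
    (hRZ : 4 ^ s * ∑' c : ℕ, (c : ℝ) ^ (-((t + 1) / 2)) ≤
      lurothR αε b n ^ ((t - 1) / 2)) :
    ∑' c : {c : ℕ // lurothR αε b n ≤ (c : ℝ)},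
        Metric.diam (lurothK αε (Function.update b (n + 1) (c : ℕ)) (n + 1)) ^ s
      ≤ Metric.diam (lurothK αε b n) ^ s := by
  set R := lurothR αε b n
  set P := lurothCylLength b n
  set Z := ∑' c : ℕ, (c : ℝ) ^ (-((t + 1) / 2))
  have hP : 0 < P := lurothCylLength_pos hb
  have hchild (c : {c : ℕ // R ≤ c}) :
      Metric.diam (lurothK αε (Function.update b (n + 1) c) (n + 1)) ^ s
        ≤ (4 * P / R) ^ s * (c : ℝ) ^ (-t) := by
    calc _ ≤ (4 * P / R * (c : ℝ) ^ (-(2 + 1 / αε))) ^ s :=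
          Real.rpow_le_rpow Metric.diam_nonneg (diam_lurothK_update_le hαε.le hn hb hR c.2) hs.le
      _ = (4 * P / R) ^ s * (c : ℝ) ^ (-t) := by
          rw [Real.mul_rpow (by positivity) (by positivity), ← Real.rpow_mul (by positivity),
            ht_def, neg_mul]
  calc _ ≤ (4 * P / R) ^ s * R ^ (-((t - 1) / 2)) * Z :=
        tsum_le_of_le_mul_rpow_neg (by linarith) (by positivity) ht hchild
    _ = (P / R) ^ s * (4 ^ s * Z / R ^ ((t - 1) / 2)) := by
        rw [mul_div_assoc, Real.mul_rpow (by norm_num) (by positivity),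
          Real.rpow_neg (by positivity)]
        ring
    _ ≤ (P / R) ^ s :=
        mul_le_of_le_one_right (by positivity) ((div_le_one (by positivity)).2 hRZ)
    _ ≤ Metric.diam (lurothK αε b n) ^ s :=
        Real.rpow_le_rpow (by positivity)
          (lurothCylLength_div_lurothR_le_diam hb (by linarith)) hs.le

theorem luroth_K_sum_rpow_le_general (α ε δ₁ : ℝ) (hα : 0 < α) (hε : 0 < ε)
    (hδ₁ : 0 < δ₁) (s : ℝ)
    (hs : s = (α + ε) / (2 * (α + ε) + 1) + δ₁) :
    ∃ N : ℕ, ∀ n, N ≤ n → ∀ b : ℕ → ℕ, (∀ j ∈ Finset.Icc 1 n, 2 ≤ b j) →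
      ∑' c : {c : ℕ // lurothR (α + ε) b n ≤ (c : ℝ)},
          Metric.diam (lurothK (α + ε) (Function.update b (n + 1) (c : ℕ)) (n + 1)) ^ s
        ≤ Metric.diam (lurothK (α + ε) b n) ^ s := by
  have hαε : 0 < α + ε := add_pos hα hε
  have hs0 : 0 < s := by rw [hs]; positivity
  set t := (2 + 1 / (α + ε)) * s with ht_def
  have ht : 1 < t := by
    have : t = 1 + (2 + 1 / (α + ε)) * δ₁ := by rw [ht_def, hs]; field_simp
    have : 0 < (2 + 1 / (α + ε)) * δ₁ := by positivity
    linarith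
  have hgrow : Tendsto (fun n : ℕ => (2 : ℝ) ^ ((n : ℝ) / (α + ε))) atTop atTop :=
    (tendsto_rpow_atTop_of_base_gt_one 2 one_lt_two).comp
      (tendsto_natCast_atTop_atTop.atTop_div_const hαε)
  obtain ⟨N, hN⟩ := eventually_atTop.1 <| (eventually_ge_atTop 1).and <|
    (hgrow.eventually_ge_atTop 2).and <|
    ((tendsto_rpow_atTop (by linarith : 0 < (t - 1) / 2)).comp hgrow).eventually_ge_atTop
      (4 ^ s * ∑' c : ℕ, (c : ℝ) ^ (-((t + 1) / 2)))
  refine ⟨N, fun n hn b hb => ?_⟩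
  obtain ⟨hn1, hR2, hRZ⟩ := hN n hn
  have hRlow := two_rpow_le_lurothR hαε.le hn1 hb
  exact tsum_diam_lurothK_update_rpow_le hαε hs0 ht_def ht hn1 hb (hR2.trans hRlow)
    (hRZ.trans (Real.rpow_le_rpow (by positivity) hRlow (by linarith)))

/-- For α, ε > 0 and 0 < δ₁ < 1/(2 + 1/(α+ε)), setting
s = (α+ε)/(2(α+ε)+1) + δ₁, there is N such that for all n ≥ N and all words b of
length n with digits ≥ 2, ∑_{c ≥ R_n(b)} |K_{n+1}(b c)|^s ≤ |K_n(b)|^s. -/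
theorem luroth_K_sum_rpow_le (α ε δ₁ : ℝ) (hα : 0 < α) (hε : 0 < ε)
    (hδ₁ : 0 < δ₁) (hδ₁' : δ₁ < 1 / (2 + 1 / (α + ε))) (s : ℝ)
    (hs : s = (α + ε) / (2 * (α + ε) + 1) + δ₁) :
    ∃ N : ℕ, ∀ n, N ≤ n → ∀ b : ℕ → ℕ, (∀ j ∈ Finset.Icc 1 n, 2 ≤ b j) →
      ∑' c : {c : ℕ // lurothR (α + ε) b n ≤ (c : ℝ)},
          Metric.diam (lurothK (α + ε) (Function.update b (n + 1) (c : ℕ)) (n + 1)) ^ s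
        ≤ Metric.diam (lurothK (α + ε) b n) ^ s :=
  luroth_K_sum_rpow_le_general α ε δ₁ hα hε hδ₁ s hs
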